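/- Let u be a fully commutative element of W(A_n) with σ_1 ∈ Supp(u). Then σ_1 occurs exactly once in every reduced expression of u. -/

import Mathlib

open CoxeterSystem

def CommMove {B : Type*} (M : CoxeterMatrix B) (ω₁ ω₂ : List B) : Prop :=
  ∃ (l r : List B) (s t : B), M s t = 2 ∧ ω₁ = l ++ s :: t :: r ∧ ω₂ = l ++ t :: s :: r

def CommEquiv {B : Type*} (M : CoxeterMatrix B) : List B → List B → Prop :=
  Relation.ReflTransGen (CommMove M)

def IsRedexOf {B W : Type*} [Group W] {M : CoxeterMatrix B} (cs : CoxeterSystem M W)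
    (ω : List B) (w : W) : Prop :=
  cs.wordProd ω = w ∧ cs.IsReduced ω

def IsFC {B W : Type*} [Group W] {M : CoxeterMatrix B} (cs : CoxeterSystem M W) (w : W) : Prop :=
  ∀ ω₁ ω₂, IsRedexOf cs ω₁ w → IsRedexOf cs ω₂ w → CommEquiv M ω₁ ω₂

/-! Two occurrences of a generator `σₖ` in a reduced expression of a fully commutative element
cannot enclose a factor `m` made only of generators `σⱼ` with `j ≥ k`. This goes by induction on
the length of `m`. If `σₖ` occurs in `m`, or `σₖ₊₁` occurs in `m` twice, the factor between two
such equal letters is a shorter instance. If `σₖ₊₁` does not occur in `m`, then `σₖ` commutes past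
`m` and cancels, so the expression is not reduced. If it occurs exactly once, both copies of `σₖ`
commute up to it, and the braid move `σₖσₖ₊₁σₖ = σₖ₊₁σₖσₖ₊₁` yields a reduced expression with one
`σₖ` fewer, whereas commutation moves preserve letter counts. Since `σ₁` is the smallest
generator, it cannot occur twice. -/

theorem List.exists_eq_append_cons_append_cons_of_two_le_count {α : Type*} [DecidableEq α]
    {x : α} {l : List α} (h : 2 ≤ l.count x) : ∃ a m b, l = a ++ x :: (m ++ x :: b) := by
  obtain ⟨a, rest, hxa, rfl, -⟩ :=
    List.exists_erase_eq (List.count_pos_iff.mp (by omega : 0 < l.count x))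
  have hx : x ∈ rest := by
    rw [List.count_append, List.count_cons_self, List.count_eq_zero_of_not_mem hxa] at h
    exact List.count_pos_iff.mp (by omega)
  obtain ⟨m, b, rfl⟩ := List.append_of_mem hx
  exact ⟨a, m, b, rfl⟩

theorem CommEquiv.perm {B : Type*} {M : CoxeterMatrix B} {ω₁ ω₂ : List B}
    (h : CommEquiv M ω₁ ω₂) : ω₁.Perm ω₂ := by
  induction h with
  | refl => rfl
  | tail _ hmove ih =>
    obtain ⟨l, r, s, t, -, rfl, rfl⟩ := hmove
    exact ih.trans ((List.Perm.swap t s r).append_left l)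

namespace CoxeterSystem

variable {B W : Type*} [Group W] {M : CoxeterMatrix B} (cs : CoxeterSystem M W)

theorem commute_simple_of_eq_two {i j : B} (h : M i j = 2) :
    Commute (cs.simple i) (cs.simple j) := by
  rw [commute_iff_eq]
  have := cs.wordProd_braidWord_eq i j
  rw [braidWord, braidWord, M.symmetric j i, h] at this
  simpa [alternatingWord, wordProd] using this

theorem simple_mul_simple_mul_simple_of_eq_three {i j : B} (h : M i j = 3) :
    cs.simple i * cs.simple j * cs.simple i = cs.simple j * cs.simple i * cs.simple j := by
  have := cs.wordProd_braidWord_eq i j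
  rw [braidWord, braidWord, M.symmetric j i, h] at this
  simpa [alternatingWord, wordProd, mul_assoc] using this.symm

theorem commute_simple_wordProd {k : B} {m : List B} (h : ∀ x ∈ m, M k x = 2) :
    Commute (cs.simple k) (cs.wordProd m) :=
  Commute.list_prod_right _ _ (by simpa using fun x hx => cs.commute_simple_of_eq_two (h x hx))

theorem not_isReduced_of_eq_two {k : B} {a m b : List B} (h : ∀ x ∈ m, M k x = 2) :
    ¬ cs.IsReduced (a ++ k :: (m ++ k :: b)) := by
  intro hred
  have hπ : cs.wordProd (a ++ k :: (m ++ k :: b)) = cs.wordProd (a ++ (m ++ b)) := by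
    simp only [wordProd_append, wordProd_cons]
    rw [← mul_assoc (cs.simple k), (cs.commute_simple_wordProd h).eq, mul_assoc,
      simple_mul_simple_cancel_left]
  have hle := cs.length_wordProd_le (a ++ (m ++ b))
  rw [← hπ, hred] at hle
  simp at hle

theorem wordProd_eq_of_braid_across {k k' : B} {a p q b : List B} (hp : ∀ x ∈ p, M k x = 2)
    (hq : ∀ x ∈ q, M k x = 2) (h3 : M k k' = 3) :
    cs.wordProd (a ++ k :: (p ++ k' :: (q ++ k :: b))) =
      cs.wordProd (a ++ (p ++ k' :: k :: k' :: (q ++ b))) := by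
  simp only [wordProd_append, wordProd_cons]
  rw [← mul_assoc (cs.wordProd q), ← (cs.commute_simple_wordProd hq).eq, mul_assoc,
    ← mul_assoc (cs.simple k), (cs.commute_simple_wordProd hp).eq, mul_assoc]
  simp only [← mul_assoc, cs.simple_mul_simple_mul_simple_of_eq_three h3]

end CoxeterSystem

theorem IsRedexOf.of_wordProd_eq {B W : Type*} [Group W] {M : CoxeterMatrix B}
    {cs : CoxeterSystem M W} {ω ω' : List B} {u : W} (h : IsRedexOf cs ω u)
    (hπ : cs.wordProd ω' = cs.wordProd ω) (hlen : ω'.length = ω.length) : IsRedexOf cs ω' u :=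
  ⟨hπ.trans h.1, by rw [CoxeterSystem.IsReduced, hπ, hlen]; exact h.2⟩

namespace IsFC

variable {B W : Type*} [Group W] {M : CoxeterMatrix B} {cs : CoxeterSystem M W} {u : W}

theorem count_eq [DecidableEq B] (hu : IsFC cs u) {ω₁ ω₂ : List B} (h₁ : IsRedexOf cs ω₁ u)
    (h₂ : IsRedexOf cs ω₂ u) (b : B) : ω₁.count b = ω₂.count b :=
  (hu ω₁ ω₂ h₁ h₂).perm.count_eq b

theorem not_isRedexOf_braid_across (hu : IsFC cs u) {k k' : B} {a p q b : List B}
    (hp : ∀ x ∈ p, M k x = 2) (hq : ∀ x ∈ q, M k x = 2) (h3 : M k k' = 3) :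
    ¬ IsRedexOf cs (a ++ k :: (p ++ k' :: (q ++ k :: b))) u := by
  classical
  intro hω
  have hω' := hω.of_wordProd_eq (cs.wordProd_eq_of_braid_across hp hq h3).symm (by simp; omega)
  have hkk' : k' ≠ k := by rintro rfl; simp at h3
  have hcount := hu.count_eq hω hω' k
  simp [List.count_append, hkk'] at hcount
  omega

end IsFC

namespace CoxeterMatrix

variable {n : ℕ} {i j : Fin n}

theorem A_apply_of_add_two_le (h : (i : ℕ) + 2 ≤ j) : CoxeterMatrix.A n i j = 2 := by
  have hij : i ≠ j := fun he => by subst he; omega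
  simp [CoxeterMatrix.A, hij]
  omega

theorem A_apply_of_add_one_eq (h : (i : ℕ) + 1 = j) : CoxeterMatrix.A n i j = 3 := by
  have hij : i ≠ j := fun he => by subst he; omega
  simp [CoxeterMatrix.A, hij, h]

end CoxeterMatrix

theorem IsFC.not_isRedexOf_of_forall_le {n : ℕ} {W : Type*} [Group W]
    {cs : CoxeterSystem (CoxeterMatrix.A n) W} {u : W} (hu : IsFC cs u) {k : Fin n}
    {m : List (Fin n)} (hm : ∀ x ∈ m, k ≤ x) (a b : List (Fin n)) :
    ¬ IsRedexOf cs (a ++ k :: (m ++ k :: b)) u := by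
  induction hlen : m.length using Nat.strong_induction_on generalizing k m a b with
  | _ N ih =>
  subst hlen
  intro hω
  by_cases hkm : k ∈ m
  · obtain ⟨p, q, rfl⟩ := List.append_of_mem hkm
    exact ih p.length (by simp) (fun x hx => hm x (by simp [hx])) a (q ++ k :: b) rfl
      (by simpa using hω)
  have hlt : ∀ x ∈ m, k < x := fun x hx => lt_of_le_of_ne (hm x hx) (fun he => hkm (he ▸ hx))
  by_cases hnext : ∃ k' ∈ m, (k' : ℕ) = k + 1
  · obtain ⟨k', hk'm, hk'⟩ := hnext
    obtain ⟨p, q, hk'p, rfl, -⟩ := List.exists_erase_eq hk'm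
    by_cases hk'q : k' ∈ q
    · obtain ⟨r, t, rfl⟩ := List.append_of_mem hk'q
      refine ih r.length (by simp; omega) (fun x hx => ?_) (a ++ k :: p) (t ++ k :: b) rfl
        (by simpa using hω)
      have := hlt x (by simp [hx])
      omega
    · have hfar : ∀ x, x ∈ p ∨ x ∈ q → CoxeterMatrix.A n k x = 2 := by
        intro x hx
        have hxk' : x ≠ k' := by rintro rfl; tauto
        have := hlt x (by simp only [List.mem_append, List.mem_cons]; tauto)
        exact CoxeterMatrix.A_apply_of_add_two_le (by omega)
      exact hu.not_isRedexOf_braid_across (fun x hx => hfar x (.inl hx))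
        (fun x hx => hfar x (.inr hx)) (CoxeterMatrix.A_apply_of_add_one_eq hk'.symm)
        (by simpa using hω)
  · simp only [not_exists, not_and] at hnext
    exact CoxeterSystem.not_isReduced_of_eq_two cs
      (fun x hx => CoxeterMatrix.A_apply_of_add_two_le (by
        have h1 := hlt x hx; have h2 := hnext x hx; omega)) hω.2

open Fin.NatCast in
/-- The generator `σ₁` is indexed by `((0 : ℕ) : Fin n)`. -/
theorem sigma_one_occurs_once (n : ℕ) [NeZero n] {W : Type*} [Group W]
    (cs : CoxeterSystem (CoxeterMatrix.Aₙ n) W) (u : W) (hu : IsFC cs u)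
    (hsupp : ∃ ω, IsRedexOf cs ω u ∧ ((0 : ℕ) : Fin n) ∈ ω) :
    ∀ ω, IsRedexOf cs ω u → ω.count ((0 : ℕ) : Fin n) = 1 := by
  intro ω hω
  obtain ⟨ω₀, h₀, hmem⟩ := hsupp
  have hpos : 0 < ω.count ((0 : ℕ) : Fin n) :=
    hu.count_eq h₀ hω _ ▸ List.count_pos_iff.mpr hmem
  by_contra hne
  have htwo : 2 ≤ ω.count ((0 : ℕ) : Fin n) := by omega
  obtain ⟨a, m, b, rfl⟩ := List.exists_eq_append_cons_append_cons_of_two_le_count htwo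
  exact hu.not_isRedexOf_of_forall_le (fun x _ => by simp) a b hω
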